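/- arXiv:1601.06003 — 4 statements merged into one kernel-verified Lean document; each statement's English description precedes it below -/
import Mathlib

section
/- There exists a constant C > 0 such that for every integer k ≥ 1 and every u ∈ ℝ, ‖Z_k(u)‖² = Σ_{i=0}^{k−1} ℋ_i(u)² ≤ C k; in particular sup_{u ∈ ℝ} ‖Z_k(u)‖ ≤ C' √k for a constant C' > 0. -/
open MeasureTheory Real Filter

/-- Physicists' Hermite polynomials: `H 0 = 1`, `H 1 = 2x`,
`H (i+1) = 2x * H i - 2i * H (i-1)`. -/
noncomputable def physHermite : ℕ → ℝ → ℝ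
  | 0 => fun _ => 1
  | 1 => fun x => 2 * x
  | n + 2 => fun x => 2 * x * physHermite (n + 1) x - 2 * (n + 1) * physHermite n x

/-- Hermite functions `ℋ_i(x) = (√π 2^i i!)^{-1/2} H_i(x) e^{-x²/2}`. -/
noncomputable def hermiteFun (i : ℕ) (x : ℝ) : ℝ :=
  (Real.sqrt (Real.sqrt Real.pi * 2 ^ i * Nat.factorial i))⁻¹ * physHermite i x *
    Real.exp (-x ^ 2 / 2)

/-! The derivative of `S_k = ∑_{i<k} ℋ_i²` telescopes, by the ladder relations of the Hermite
functions, to `-√(2k) ℋ_{k-1} ℋ_k`, whose `L¹` norm is at most `√(2k)` because the `ℋ_i` are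
`L²`-normalised: the integral over `ℝ` of `(H_{n+1} H_n e^{-x²})'` vanishes, which gives
`‖H_{n+1}‖² = 2(n+1) ‖H_n‖²` for the Gaussian weight. Hence `S_k` oscillates by at most
`√(2k)`; being integrable on `ℝ` it takes arbitrarily small values, so `S_k ≤ √(2k) ≤ 2k`. -/

open Polynomial

noncomputable def physHermitePoly : ℕ → ℝ[X]
  | 0 => 1
  | 1 => 2 * X
  | n + 2 => 2 * X * physHermitePoly (n + 1) - (2 * (n + 1) : ℝ[X]) * physHermitePoly n

theorem physHermite_eq_eval (n : ℕ) (x : ℝ) : physHermite n x = (physHermitePoly n).eval x := by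
  induction n using Nat.strong_induction_on with
  | _ n ih =>
    match n with
    | 0 => simp [physHermite, physHermitePoly]
    | 1 => simp [physHermite, physHermitePoly]
    | n + 2 => simp [physHermite, physHermitePoly, ih n (by omega), ih (n + 1) (by omega)]

theorem physHermitePoly_add_two (n : ℕ) : physHermitePoly (n + 2) =
    2 * X * physHermitePoly (n + 1) - (2 * (n + 1) : ℝ[X]) * physHermitePoly n := rfl

theorem derivative_physHermitePoly_succ (n : ℕ) :
    derivative (physHermitePoly (n + 1)) = (2 * (n + 1) : ℝ[X]) * physHermitePoly n := by
  induction n using Nat.strong_induction_on with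
  | _ n ih =>
    match n with
    | 0 => simp [physHermitePoly]
    | 1 =>
      simp only [physHermitePoly, CharP.cast_eq_zero, zero_add, mul_one, derivative_sub,
        derivative_mul, derivative_ofNat, zero_mul, derivative_X, sub_zero]
      ring
    | n + 2 =>
      rw [physHermitePoly_add_two (n + 1), derivative_sub, derivative_mul, derivative_mul,
        ih (n + 1) (by omega), physHermitePoly_add_two n]
      simp only [derivative_ofNat, zero_mul, derivative_X, mul_one, zero_add, Nat.cast_add,
        Nat.cast_one, derivative_mul, derivative_add, derivative_natCast, derivative_one, add_zero,
        mul_zero, ih n (by omega), Nat.cast_ofNat]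
      ring

theorem physHermitePoly_succ (n : ℕ) :
    physHermitePoly (n + 1) = 2 * X * physHermitePoly n - derivative (physHermitePoly n) := by
  cases n with
  | zero => simp [physHermitePoly]
  | succ n => rw [derivative_physHermitePoly_succ, physHermitePoly]

theorem integrable_eval_mul_exp_neg_mul_sq {b : ℝ} (hb : 0 < b) (p : ℝ[X]) :
    Integrable fun x : ℝ => p.eval x * exp (-b * x ^ 2) := by
  induction p using Polynomial.induction_on' with
  | add p q hp hq => exact (hp.add hq).congr (.of_forall fun x => by simp [add_mul])
  | monomial n c =>
    have h := integrable_rpow_mul_exp_neg_mul_sq hb (s := n)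
      (by linarith [n.cast_nonneg (α := ℝ)])
    simpa [mul_assoc] using h.const_mul c

theorem integrable_eval_mul_exp_neg_sq (p : ℝ[X]) :
    Integrable fun x : ℝ => p.eval x * exp (-x ^ 2) := by
  simpa using integrable_eval_mul_exp_neg_mul_sq one_pos p

theorem integral_eval_derivative_sub_mul_exp_neg_sq (p : ℝ[X]) :
    ∫ x, (derivative p - 2 * X * p).eval x * exp (-x ^ 2) = 0 := by
  refine integral_eq_zero_of_hasDerivAt_of_integrable (fun x => ?_)
    (integrable_eval_mul_exp_neg_sq _) (integrable_eval_mul_exp_neg_sq p)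
  have hgauss : HasDerivAt (fun y : ℝ => exp (-y ^ 2)) (exp (-x ^ 2) * -(2 * x)) x :=
    (((hasDerivAt_pow 2 x).fun_neg).congr_deriv (by ring)).exp
  refine ((p.hasDerivAt x).mul hgauss).congr_deriv ?_
  simp only [eval_sub, eval_mul, eval_ofNat, eval_X]
  ring

noncomputable def physHermiteNormSq (n : ℕ) : ℝ := √π * 2 ^ n * n.factorial

theorem physHermiteNormSq_pos (n : ℕ) : 0 < physHermiteNormSq n := by
  unfold physHermiteNormSq; have := Real.sqrt_pos.2 pi_pos; positivity

theorem physHermiteNormSq_succ (n : ℕ) :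
    physHermiteNormSq (n + 1) = 2 * (n + 1) * physHermiteNormSq n := by
  simp only [physHermiteNormSq, Nat.factorial_succ]; push_cast; ring

theorem integral_eval_physHermitePoly_sq_mul_exp_neg_sq (n : ℕ) :
    ∫ x, (physHermitePoly n).eval x ^ 2 * exp (-x ^ 2) = physHermiteNormSq n := by
  induction n with
  | zero => simpa [physHermitePoly, physHermiteNormSq] using integral_gaussian 1
  | succ n ih =>
    have hraise : derivative (physHermitePoly (n + 1) * physHermitePoly n)
          - 2 * X * (physHermitePoly (n + 1) * physHermitePoly n)
        = (2 * (n + 1) : ℝ[X]) * physHermitePoly n ^ 2 - physHermitePoly (n + 1) ^ 2 := by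
      rw [derivative_mul, derivative_physHermitePoly_succ, physHermitePoly_succ n]; ring
    have h := integral_eval_derivative_sub_mul_exp_neg_sq
      (physHermitePoly (n + 1) * physHermitePoly n)
    simp only [hraise, eval_sub, sub_mul] at h
    rw [integral_sub (integrable_eval_mul_exp_neg_sq _) (integrable_eval_mul_exp_neg_sq _),
      sub_eq_zero] at h
    calc ∫ x, (physHermitePoly (n + 1)).eval x ^ 2 * exp (-x ^ 2)
        = ∫ x, (physHermitePoly (n + 1) ^ 2).eval x * exp (-x ^ 2) := by simp only [eval_pow]
      _ = ∫ x, ((2 * (n + 1) : ℝ[X]) * physHermitePoly n ^ 2).eval x * exp (-x ^ 2) := h.symm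
      _ = 2 * (n + 1) * ∫ x, (physHermitePoly n).eval x ^ 2 * exp (-x ^ 2) := by
        simp [← integral_const_mul, mul_assoc]
      _ = physHermiteNormSq (n + 1) := by rw [ih, physHermiteNormSq_succ]

theorem hermiteFun_eq (i : ℕ) (x : ℝ) : hermiteFun i x =
    (√(physHermiteNormSq i))⁻¹ * (physHermitePoly i).eval x * exp (-x ^ 2 / 2) := by
  rw [hermiteFun, physHermite_eq_eval, physHermiteNormSq]

theorem hermiteFun_mul_hermiteFun (i j : ℕ) (x : ℝ) : hermiteFun i x * hermiteFun j x =
    ((√(physHermiteNormSq i))⁻¹ * (√(physHermiteNormSq j))⁻¹) *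
      ((physHermitePoly i * physHermitePoly j).eval x * exp (-x ^ 2)) := by
  have hexp : exp (-x ^ 2) = exp (-x ^ 2 / 2) * exp (-x ^ 2 / 2) := by rw [← exp_add]; ring_nf
  rw [hermiteFun_eq, hermiteFun_eq, hexp, eval_mul]; ring

theorem integrable_hermiteFun_mul (i j : ℕ) :
    Integrable fun x => hermiteFun i x * hermiteFun j x := by
  simp only [hermiteFun_mul_hermiteFun]
  exact (integrable_eval_mul_exp_neg_sq _).const_mul _

theorem hermiteFun_sq (i : ℕ) (x : ℝ) : hermiteFun i x ^ 2 =
    (physHermiteNormSq i)⁻¹ * ((physHermitePoly i).eval x ^ 2 * exp (-x ^ 2)) := by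
  rw [sq (hermiteFun i x), hermiteFun_mul_hermiteFun, ← mul_inv,
    Real.mul_self_sqrt (physHermiteNormSq_pos i).le, eval_mul, ← sq]

theorem integral_hermiteFun_sq (i : ℕ) : ∫ x, hermiteFun i x ^ 2 = 1 := by
  simp only [hermiteFun_sq, integral_const_mul, integral_eval_physHermitePoly_sq_mul_exp_neg_sq]
  exact inv_mul_cancel₀ (physHermiteNormSq_pos i).ne'

theorem integral_abs_hermiteFun_mul_le_one (i j : ℕ) :
    ∫ x, |hermiteFun i x * hermiteFun j x| ≤ 1 := by
  have hamgm (x : ℝ) : |hermiteFun i x * hermiteFun j x|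
      ≤ (hermiteFun i x ^ 2 + hermiteFun j x ^ 2) / 2 := by
    rw [abs_mul, ← sq_abs (hermiteFun i x), ← sq_abs (hermiteFun j x)]
    nlinarith [two_mul_le_add_sq |hermiteFun i x| |hermiteFun j x|]
  have hsq (n : ℕ) : Integrable fun x => hermiteFun n x ^ 2 := by
    simpa only [sq] using integrable_hermiteFun_mul n n
  calc ∫ x, |hermiteFun i x * hermiteFun j x|
      ≤ ∫ x, (hermiteFun i x ^ 2 + hermiteFun j x ^ 2) / 2 :=
        integral_mono (integrable_hermiteFun_mul i j).abs (((hsq i).add (hsq j)).div_const 2) hamgm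
    _ = 1 := by
      rw [integral_div, integral_add (hsq i) (hsq j), integral_hermiteFun_sq,
        integral_hermiteFun_sq]
      norm_num

theorem sqrt_physHermiteNormSq_succ (n : ℕ) :
    √(physHermiteNormSq (n + 1)) = √(2 * (n + 1)) * √(physHermiteNormSq n) := by
  rw [physHermiteNormSq_succ, Real.sqrt_mul (by positivity)]

theorem sqrt_mul_hermiteFun_succ (i : ℕ) (x : ℝ) : √(2 * (i + 1)) * hermiteFun (i + 1) x =
    (√(physHermiteNormSq i))⁻¹ * (physHermitePoly (i + 1)).eval x * exp (-x ^ 2 / 2) := by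
  have hc : √(2 * (i + 1) : ℝ) ≠ 0 := by positivity
  rw [hermiteFun_eq, sqrt_physHermiteNormSq_succ, mul_inv]
  field_simp

-- For `i = 0` both sides vanish, whatever the truncated `i - 1` is.
theorem sqrt_mul_hermiteFun_pred (i : ℕ) (x : ℝ) : √(2 * i) * hermiteFun (i - 1) x =
    (√(physHermiteNormSq i))⁻¹ * (derivative (physHermitePoly i)).eval x * exp (-x ^ 2 / 2) := by
  cases i with
  | zero => simp [physHermitePoly]
  | succ i =>
    have hc : √(2 * (i + 1) : ℝ) ≠ 0 := by positivity
    have hsq : √(2 * (i + 1) : ℝ) ^ 2 = 2 * (i + 1) := Real.sq_sqrt (by positivity)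
    rw [Nat.add_sub_cancel, hermiteFun_eq, sqrt_physHermiteNormSq_succ,
      derivative_physHermitePoly_succ]
    push_cast
    field_simp
    simp only [eval_mul, eval_ofNat, eval_add, eval_natCast, eval_one]
    linear_combination (eval x (physHermitePoly i) / √(physHermiteNormSq i)) * hsq

theorem hasDerivAt_hermiteFun (i : ℕ) (x : ℝ) : HasDerivAt (hermiteFun i)
    ((√(2 * i) * hermiteFun (i - 1) x - √(2 * (i + 1)) * hermiteFun (i + 1) x) / 2) x := by
  have hgauss : HasDerivAt (fun y : ℝ => exp (-y ^ 2 / 2)) (exp (-x ^ 2 / 2) * -x) x :=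
    (((hasDerivAt_pow 2 x).fun_neg.div_const 2).congr_deriv (by ring)).exp
  have h := (((physHermitePoly i).hasDerivAt x).const_mul (√(physHermiteNormSq i))⁻¹).mul hgauss
  rw [show hermiteFun i = _ from funext (hermiteFun_eq i)]
  refine h.congr_deriv ?_
  rw [sqrt_mul_hermiteFun_pred, sqrt_mul_hermiteFun_succ, physHermitePoly_succ]
  simp only [eval_sub, eval_mul, eval_X, eval_ofNat]
  ring

theorem hasDerivAt_sum_hermiteFun_sq (k : ℕ) (x : ℝ) :
    HasDerivAt (fun u => ∑ i ∈ Finset.range k, hermiteFun i u ^ 2)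
      (-(√(2 * k) * (hermiteFun (k - 1) x * hermiteFun k x))) x := by
  set flux : ℕ → ℝ := fun i => √(2 * i) * (hermiteFun (i - 1) x * hermiteFun i x)
  have hsq (i : ℕ) : HasDerivAt (fun u => hermiteFun i u ^ 2) (flux i - flux (i + 1)) x := by
    refine ((hasDerivAt_hermiteFun i x).pow 2).congr_deriv ?_
    simp only [flux, Nat.add_sub_cancel, Nat.cast_succ]
    ring
  have h := HasDerivAt.sum fun i (_ : i ∈ Finset.range k) => hsq i
  rw [Finset.sum_range_sub'] at h
  simpa [flux, Finset.sum_fn] using h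

theorem sub_le_integral_abs_of_hasDerivAt {f f' : ℝ → ℝ} (hf : ∀ x, HasDerivAt f (f' x) x)
    (hf' : Integrable f') (a b : ℝ) : f b - f a ≤ ∫ x, |f' x| := by
  rw [← intervalIntegral.integral_eq_sub_of_hasDerivAt (fun x _ => hf x)
    (hf'.intervalIntegrable)]
  calc (∫ x in a..b, f' x) ≤ |∫ x in a..b, f' x| := le_abs_self _
    _ ≤ ∫ x in Set.uIoc a b, |f' x| := by
      simpa only [Real.norm_eq_abs] using
        intervalIntegral.norm_integral_le_integral_norm_uIoc (f := f') (a := a) (b := b)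
    _ ≤ ∫ x, |f' x| := setIntegral_le_integral hf'.abs (.of_forall fun x => abs_nonneg _)

theorem MeasureTheory.Integrable.exists_lt {α : Type*} [MeasurableSpace α] {μ : Measure α}
    (hμ : μ Set.univ = ⊤) {f : α → ℝ} (hf : Integrable f μ) {ε : ℝ} (hε : 0 < ε) :
    ∃ x, f x < ε := by
  by_contra! hge
  have hconst : Integrable (fun _ => ε) μ :=
    hf.mono' aestronglyMeasurable_const (.of_forall fun x => by
      rw [Real.norm_of_nonneg hε.le]; exact hge x)
  rcases integrable_const_iff.1 hconst with hzero | hfin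
  · exact hε.ne' hzero
  · exact measure_ne_top μ Set.univ hμ

theorem sum_hermiteFun_sq_le (k : ℕ) (u : ℝ) :
    ∑ i ∈ Finset.range k, hermiteFun i u ^ 2 ≤ √(2 * k) := by
  set S : ℝ → ℝ := fun u => ∑ i ∈ Finset.range k, hermiteFun i u ^ 2
  have hS : Integrable S := integrable_finsetSum _ fun i _ => by
    simpa only [sq] using integrable_hermiteFun_mul i i
  have hvar (v : ℝ) : S u - S v ≤ √(2 * k) := by
    refine (sub_le_integral_abs_of_hasDerivAt (hasDerivAt_sum_hermiteFun_sq k)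
      ((integrable_hermiteFun_mul _ _).const_mul _).neg v u).trans ?_
    simp only [abs_neg, abs_mul (√(2 * k : ℝ)), abs_of_nonneg (Real.sqrt_nonneg _),
      integral_const_mul]
    exact mul_le_of_le_one_right (Real.sqrt_nonneg _) (integral_abs_hermiteFun_mul_le_one _ _)
  refine le_of_forall_pos_lt_add fun ε hε => ?_
  obtain ⟨v, hv⟩ := hS.exists_lt Real.volume_univ hε
  linarith [hvar v]

/-- Bound on `‖Z_k(u)‖² = Σ_{i<k} ℋ_i(u)²`: it is at most `C k` uniformly in `u`, and hence
`‖Z_k(u)‖ ≤ C' √k` uniformly in `u`. -/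
theorem Zk_norm_bound :
    (∃ C > (0 : ℝ), ∀ k : ℕ, 1 ≤ k → ∀ u : ℝ,
      ∑ i ∈ Finset.range k, hermiteFun i u ^ 2 ≤ C * k) ∧
    (∃ C' > (0 : ℝ), ∀ k : ℕ, 1 ≤ k → ∀ u : ℝ,
      Real.sqrt (∑ i ∈ Finset.range k, hermiteFun i u ^ 2) ≤ C' * Real.sqrt k) := by
  have hbound (k : ℕ) (hk : 1 ≤ k) (u : ℝ) :
      ∑ i ∈ Finset.range k, hermiteFun i u ^ 2 ≤ 2 * k := by
    have hk' : (1 : ℝ) ≤ k := by exact_mod_cast hk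
    exact (sum_hermiteFun_sq_le k u).trans (Real.sqrt_le_iff.2 ⟨by positivity, by nlinarith⟩)
  refine ⟨⟨2, two_pos, hbound⟩, ⟨2, two_pos, fun k hk u => ?_⟩⟩
  refine (Real.sqrt_le_sqrt (hbound k hk u)).trans (Real.sqrt_le_iff.2 ⟨by positivity, ?_⟩)
  rw [mul_pow, Real.sq_sqrt k.cast_nonneg]
  linarith [k.cast_nonneg (α := ℝ)]
end

section
/- There exists a constant C > 0 such that for every integer k ≥ 1 and every u ∈ ℝ, Σ_{i=0}^{k−1} (ℋ_i'(u))² ≤ C k², where ℋ_i' is the derivative of the i-th Hermite function. -/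
open MeasureTheory Real Filter

/-!
Each `ℋ_n` solves the Hermite equation `f'' = (x² - (2n+1)) f`. For a solution with `f f' → 0`
at infinity, the energy `f'² + (2n+1 - x²) f²` has derivative `-2x f²`, so it decreases on
`[0, ∞)`. Past the turning point `√(2n+1)` the product `f f'` increases towards its limit `0`, so
`f f' ≤ 0` there, and then `(f'²)' = 2 (x² - (2n+1)) f f' ≤ 0`. Hence `f'(x)²` is bounded by the
energy at `0` (and at `-x` by reflection), which `H_n(0)² ≤ 2ⁿ n!` bounds by `4n + 3`.
-/

open Set Topology

lemma monotoneOn_Ici_of_hasDerivAt {g g' : ℝ → ℝ} {a : ℝ} (hg : ∀ x, HasDerivAt g (g' x) x)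
    (hg' : ∀ x, a < x → 0 ≤ g' x) : MonotoneOn g (Ici a) :=
  monotoneOn_of_hasDerivWithinAt_nonneg (convex_Ici a)
    (fun x _ ↦ (hg x).continuousAt.continuousWithinAt) (fun x _ ↦ (hg x).hasDerivWithinAt)
    (by simpa using hg')

lemma antitoneOn_Ici_of_hasDerivAt {g g' : ℝ → ℝ} {a : ℝ} (hg : ∀ x, HasDerivAt g (g' x) x)
    (hg' : ∀ x, a < x → g' x ≤ 0) : AntitoneOn g (Ici a) :=
  antitoneOn_of_hasDerivWithinAt_nonpos (convex_Ici a)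
    (fun x _ ↦ (hg x).continuousAt.continuousWithinAt) (fun x _ ↦ (hg x).hasDerivWithinAt)
    (by simpa using hg')

section HermiteEquation

variable {f f' : ℝ → ℝ} {c : ℝ}

theorem antitoneOn_energy_of_hermite_ode (hf : ∀ x, HasDerivAt f (f' x) x)
    (hf' : ∀ x, HasDerivAt f' ((x ^ 2 - c) * f x) x) :
    AntitoneOn (fun x ↦ f' x ^ 2 + (c - x ^ 2) * f x ^ 2) (Ici 0) := by
  refine antitoneOn_Ici_of_hasDerivAt (g' := fun x ↦ -2 * x * f x ^ 2) (fun x ↦ ?_)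
    fun x hx ↦ by nlinarith [sq_nonneg (f x)]
  exact ((hf' x).pow 2).add (((hasDerivAt_pow 2 x).const_sub c).mul ((hf x).pow 2))
    |>.congr_deriv (by simp only [Pi.pow_apply]; ring)

theorem mul_deriv_nonpos_of_hermite_ode (hf : ∀ x, HasDerivAt f (f' x) x)
    (hf' : ∀ x, HasDerivAt f' ((x ^ 2 - c) * f x) x)
    (hlim : Tendsto (fun x ↦ f x * f' x) atTop (𝓝 0)) {x : ℝ} (hx : √c ≤ x) :
    f x * f' x ≤ 0 := by
  have hmono : MonotoneOn (fun x ↦ f x * f' x) (Ici √c) := by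
    refine monotoneOn_Ici_of_hasDerivAt (g' := fun x ↦ f' x ^ 2 + (x ^ 2 - c) * f x ^ 2)
      (fun x ↦ ?_) fun y hy ↦ ?_
    · exact ((hf x).mul (hf' x)).congr_deriv (by ring)
    · have := (Real.sqrt_le_iff.mp hy.le).2
      nlinarith [sq_nonneg (f y), sq_nonneg (f' y)]
  refine ge_of_tendsto hlim ?_
  filter_upwards [eventually_ge_atTop x] with y hy
  exact hmono hx (hx.trans hy) hy

theorem antitoneOn_sq_deriv_of_hermite_ode (hf : ∀ x, HasDerivAt f (f' x) x)
    (hf' : ∀ x, HasDerivAt f' ((x ^ 2 - c) * f x) x)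
    (hlim : Tendsto (fun x ↦ f x * f' x) atTop (𝓝 0)) :
    AntitoneOn (fun x ↦ f' x ^ 2) (Ici √c) := by
  refine antitoneOn_Ici_of_hasDerivAt (g' := fun x ↦ 2 * (x ^ 2 - c) * (f x * f' x))
    (fun x ↦ ?_) fun y hy ↦ ?_
  · exact ((hf' x).pow 2).congr_deriv (by ring)
  · have := (Real.sqrt_le_iff.mp hy.le).2
    have := mul_deriv_nonpos_of_hermite_ode hf hf' hlim hy.le
    nlinarith

theorem sq_deriv_le_of_hermite_ode_of_nonneg (hf : ∀ x, HasDerivAt f (f' x) x)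
    (hf' : ∀ x, HasDerivAt f' ((x ^ 2 - c) * f x) x)
    (hlim : Tendsto (fun x ↦ f x * f' x) atTop (𝓝 0)) (hc : 0 ≤ c) {x : ℝ} (hx : 0 ≤ x) :
    f' x ^ 2 ≤ f' 0 ^ 2 + c * f 0 ^ 2 := by
  have henergy := antitoneOn_energy_of_hermite_ode hf hf'
  have hc0 : (0 : ℝ) ≤ √c := Real.sqrt_nonneg c
  rcases le_total x √c with hxc | hxc
  · have : x ^ 2 ≤ c := (Real.le_sqrt hx hc).mp hxc
    calc f' x ^ 2 ≤ f' x ^ 2 + (c - x ^ 2) * f x ^ 2 := by nlinarith [sq_nonneg (f x)]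
      _ ≤ f' 0 ^ 2 + (c - 0 ^ 2) * f 0 ^ 2 := henergy self_mem_Ici hx hx
      _ = f' 0 ^ 2 + c * f 0 ^ 2 := by ring
  · calc f' x ^ 2 ≤ f' √c ^ 2 :=
          antitoneOn_sq_deriv_of_hermite_ode hf hf' hlim self_mem_Ici hxc hxc
      _ = f' √c ^ 2 + (c - √c ^ 2) * f √c ^ 2 := by rw [Real.sq_sqrt hc]; ring
      _ ≤ f' 0 ^ 2 + (c - 0 ^ 2) * f 0 ^ 2 := henergy self_mem_Ici hc0 hc0
      _ = f' 0 ^ 2 + c * f 0 ^ 2 := by ring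

theorem sq_deriv_le_of_hermite_ode (hf : ∀ x, HasDerivAt f (f' x) x)
    (hf' : ∀ x, HasDerivAt f' ((x ^ 2 - c) * f x) x)
    (hlim : Tendsto (fun x ↦ f x * f' x) (cocompact ℝ) (𝓝 0)) (hc : 0 ≤ c) (x : ℝ) :
    f' x ^ 2 ≤ f' 0 ^ 2 + c * f 0 ^ 2 := by
  rcases le_total 0 x with hx | hx
  · exact sq_deriv_le_of_hermite_ode_of_nonneg hf hf' (hlim.mono_left atTop_le_cocompact) hc hx
  · have hg : ∀ x, HasDerivAt (fun y ↦ f (-y)) (-f' (-x)) x := fun x ↦ by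
      simpa [Function.comp_def] using (hf (-x)).comp x (hasDerivAt_neg x)
    have hg' : ∀ x, HasDerivAt (fun y ↦ -f' (-y)) ((x ^ 2 - c) * f (-x)) x := fun x ↦
      (((hf' (-x)).comp x (hasDerivAt_neg x)).neg).congr_deriv (by ring)
    have hglim : Tendsto (fun y ↦ f (-y) * -f' (-y)) atTop (𝓝 0) := by
      simpa using ((hlim.mono_left atBot_le_cocompact).comp tendsto_neg_atTop_atBot).neg
    simpa using sq_deriv_le_of_hermite_ode_of_nonneg hg hg' hglim hc (neg_nonneg.mpr hx)

end HermiteEquation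

@[simp] lemma physHermite_zero (x : ℝ) : physHermite 0 x = 1 := rfl

@[simp] lemma physHermite_one (x : ℝ) : physHermite 1 x = 2 * x := rfl

lemma physHermite_add_two (n : ℕ) (x : ℝ) :
    physHermite (n + 2) x = 2 * x * physHermite (n + 1) x - 2 * (n + 1) * physHermite n x := rfl

theorem hasDerivAt_physHermite (n : ℕ) (x : ℝ) :
    HasDerivAt (physHermite n) (2 * x * physHermite n x - physHermite (n + 1) x) x := by
  induction n using Nat.twoStepInduction generalizing x with
  | zero => exact (hasDerivAt_const x 1).congr_deriv (by simp)
  | one =>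
    refine ((hasDerivAt_id x).const_mul 2).congr_deriv ?_
    simp only [physHermite_add_two, zero_add, physHermite_one, physHermite_zero, Nat.cast_zero]
    ring
  | more n ih₀ ih₁ =>
    refine ((((hasDerivAt_id x).const_mul 2).mul (ih₁ x)).sub ((ih₀ x).const_mul _)).congr_deriv ?_
    simp only [physHermite_add_two, id]
    push_cast
    ring

theorem tendsto_pow_mul_exp_neg_sq_cocompact (m : ℕ) :
    Tendsto (fun x : ℝ ↦ x ^ m * exp (-x ^ 2 / 2)) (cocompact ℝ) (𝓝 0) := by
  rw [tendsto_zero_iff_norm_tendsto_zero]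
  refine (tendsto_rpow_abs_mul_exp_neg_mul_sq_cocompact one_half_pos m).congr fun x ↦ ?_
  rw [Real.rpow_natCast, norm_mul, norm_pow, Real.norm_eq_abs, Real.norm_of_nonneg (exp_pos _).le]
  ring_nf

theorem tendsto_pow_mul_physHermite_mul_exp_cocompact (n m : ℕ) :
    Tendsto (fun x ↦ x ^ m * physHermite n x * exp (-x ^ 2 / 2)) (cocompact ℝ) (𝓝 0) := by
  induction n using Nat.twoStepInduction generalizing m with
  | zero => simpa using tendsto_pow_mul_exp_neg_sq_cocompact m
  | one =>
    simpa [pow_succ, mul_assoc, mul_left_comm] using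
      (tendsto_pow_mul_exp_neg_sq_cocompact (m + 1)).const_mul 2
  | more n ih₀ ih₁ =>
    have h := ((ih₁ (m + 1)).const_mul 2).sub ((ih₀ m).const_mul (2 * ((n : ℝ) + 1)))
    rw [mul_zero, mul_zero, sub_zero] at h
    exact h.congr fun x ↦ by rw [physHermite_add_two]; ring

theorem physHermite_zero_sq_le (n : ℕ) : physHermite n 0 ^ 2 ≤ 2 ^ n * n.factorial := by
  induction n using Nat.twoStepInduction with
  | zero => simp
  | one => simp
  | more n ih₀ _ =>
    have hfac : ((n + 2).factorial : ℝ) = (n + 2) * (n + 1) * n.factorial := by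
      push_cast [Nat.factorial_succ]; ring
    calc physHermite (n + 2) 0 ^ 2 = 4 * ((n : ℝ) + 1) ^ 2 * physHermite n 0 ^ 2 := by
          rw [physHermite_add_two]; ring
      _ ≤ 4 * ((n : ℝ) + 1) ^ 2 * (2 ^ n * n.factorial) := by gcongr
      _ ≤ 4 * (((n : ℝ) + 2) * (n + 1)) * (2 ^ n * n.factorial) := by gcongr; nlinarith
      _ = 2 ^ (n + 2) * ((n + 2).factorial : ℝ) := by rw [hfac]; ring

noncomputable def hermiteFunDeriv (n : ℕ) (x : ℝ) : ℝ :=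
  (√(√π * 2 ^ n * n.factorial))⁻¹ * (x * physHermite n x - physHermite (n + 1) x) *
    exp (-x ^ 2 / 2)

theorem hasDerivAt_mul_exp_neg_sq_div_two {p : ℝ → ℝ} {p' x : ℝ} (hp : HasDerivAt p p' x) :
    HasDerivAt (fun y ↦ p y * exp (-y ^ 2 / 2)) ((p' - x * p x) * exp (-x ^ 2 / 2)) x := by
  have hexp : HasDerivAt (fun y ↦ exp (-y ^ 2 / 2)) (-x * exp (-x ^ 2 / 2)) x :=
    (((hasDerivAt_pow 2 x).neg.div_const 2).exp).congr_deriv (by simp only [Pi.neg_apply]; ring)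
  exact (hp.mul hexp).congr_deriv (by ring)

theorem hasDerivAt_hermiteFun_s5 (n : ℕ) (x : ℝ) :
    HasDerivAt (hermiteFun n) (hermiteFunDeriv n x) x :=
  (hasDerivAt_mul_exp_neg_sq_div_two ((hasDerivAt_physHermite n x).const_mul _)).congr_deriv
    (by simp only [hermiteFunDeriv]; ring)

theorem hasDerivAt_hermiteFunDeriv (n : ℕ) (x : ℝ) :
    HasDerivAt (hermiteFunDeriv n) ((x ^ 2 - (2 * n + 1)) * hermiteFun n x) x := by
  have hp := (((hasDerivAt_id x).mul (hasDerivAt_physHermite n x)).sub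
    (hasDerivAt_physHermite (n + 1) x)).const_mul (√(√π * 2 ^ n * n.factorial))⁻¹
  refine (hasDerivAt_mul_exp_neg_sq_div_two hp).congr_deriv ?_
  simp only [hermiteFun, Pi.sub_apply, Pi.mul_apply, id, physHermite_add_two]
  ring

theorem tendsto_hermiteFun_mul_hermiteFunDeriv_cocompact (n : ℕ) :
    Tendsto (fun x ↦ hermiteFun n x * hermiteFunDeriv n x) (cocompact ℝ) (𝓝 0) := by
  have hf := (tendsto_pow_mul_physHermite_mul_exp_cocompact n 0).const_mul
    (√(√π * 2 ^ n * n.factorial))⁻¹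
  have hf' := ((tendsto_pow_mul_physHermite_mul_exp_cocompact n 1).sub
    (tendsto_pow_mul_physHermite_mul_exp_cocompact (n + 1) 0)).const_mul
    (√(√π * 2 ^ n * n.factorial))⁻¹
  simpa using (hf.congr fun x ↦ by simp only [hermiteFun]; ring).mul
    (hf'.congr fun x ↦ by simp only [hermiteFunDeriv]; ring)

lemma one_le_sqrt_pi : 1 ≤ √π :=
  Real.one_le_sqrt.mpr (by linarith [Real.pi_gt_three])

theorem hermiteFun_zero_sq_le (n : ℕ) : hermiteFun n 0 ^ 2 ≤ 1 := by
  calc hermiteFun n 0 ^ 2 = physHermite n 0 ^ 2 / (√π * (2 ^ n * (n.factorial : ℝ))) := by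
        rw [hermiteFun, mul_pow, mul_pow, inv_pow, Real.sq_sqrt (by positivity)]
        simp [div_eq_inv_mul, mul_assoc]
    _ ≤ 2 ^ n * n.factorial / (1 * (2 ^ n * (n.factorial : ℝ))) := by
        gcongr
        exacts [physHermite_zero_sq_le n, one_le_sqrt_pi]
    _ = 1 := by field_simp

theorem hermiteFunDeriv_zero_sq_le (n : ℕ) : hermiteFunDeriv n 0 ^ 2 ≤ 2 * (n + 1) := by
  calc hermiteFunDeriv n 0 ^ 2
        = physHermite (n + 1) 0 ^ 2 / (√π * (2 ^ n * (n.factorial : ℝ))) := by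
        rw [hermiteFunDeriv, mul_pow, mul_pow, inv_pow, Real.sq_sqrt (by positivity)]
        simp [div_eq_inv_mul, mul_assoc]
    _ ≤ 2 ^ (n + 1) * (n + 1).factorial / (1 * (2 ^ n * (n.factorial : ℝ))) := by
        gcongr
        exacts [physHermite_zero_sq_le (n + 1), one_le_sqrt_pi]
    _ = 2 * (n + 1) := by push_cast [Nat.factorial_succ]; field_simp; ring

theorem sq_deriv_hermiteFun_le (n : ℕ) (u : ℝ) : deriv (hermiteFun n) u ^ 2 ≤ 4 * n + 3 := by
  rw [(hasDerivAt_hermiteFun_s5 n u).deriv]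
  calc hermiteFunDeriv n u ^ 2
      ≤ hermiteFunDeriv n 0 ^ 2 + (2 * n + 1) * hermiteFun n 0 ^ 2 :=
        sq_deriv_le_of_hermite_ode (hasDerivAt_hermiteFun_s5 n) (hasDerivAt_hermiteFunDeriv n)
          (tendsto_hermiteFun_mul_hermiteFunDeriv_cocompact n) (by positivity) u
    _ ≤ 2 * (n + 1) + (2 * n + 1) * 1 := by
        gcongr
        exacts [hermiteFunDeriv_zero_sq_le n, hermiteFun_zero_sq_le n]
    _ = 4 * n + 3 := by ring

/-- Bound on the sum of squared derivatives of Hermite functions: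
`Σ_{i<k} (ℋ_i'(u))² ≤ C k²` uniformly in `u`. -/
theorem hermiteFun_deriv_sum_bound :
    ∃ C > (0 : ℝ), ∀ k : ℕ, 1 ≤ k → ∀ u : ℝ,
      ∑ i ∈ Finset.range k, (deriv (hermiteFun i) u) ^ 2 ≤ C * (k : ℝ) ^ 2 := by
  refine ⟨4, by norm_num, fun k _ u ↦ ?_⟩
  calc ∑ i ∈ Finset.range k, deriv (hermiteFun i) u ^ 2
      ≤ ∑ _i ∈ Finset.range k, 4 * (k : ℝ) := by
        refine Finset.sum_le_sum fun i hi ↦ (sq_deriv_hermiteFun_le i u).trans ?_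
        have : (i : ℝ) + 1 ≤ k := by exact_mod_cast Finset.mem_range.mp hi
        linarith
    _ = 4 * (k : ℝ) ^ 2 := by simp only [Finset.sum_const, Finset.card_range, nsmul_eq_mul]; ring
end

section
/- Identifiability of the single-index model: let d ≥ 1, let g₁, g₂ : ℝ → ℝ be continuous functions with g₁(u) → 0 and g₂(u) → 0 as |u| → ∞, with g₁ not identically zero, and let θ₁, θ₂ ∈ ℝ^d be unit vectors whose first nonzero component is positive. If g₁(θ₁^⊤ x) = g₂(θ₂^⊤ x) for all x ∈ ℝ^d, then θ₁ = θ₂ and g₁ = g₂. -/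
/-!
If `θ₁` is not parallel to `θ₂`, some direction `v` is orthogonal to `θ₂` but not to `θ₁`;
moving `x` along `v` changes `θ₁ᵀx` arbitrarily while `θ₂ᵀx` stays fixed, so `g₁` is constant,
hence zero because it vanishes at infinity. Otherwise `θ₁ = ±θ₂` by normalisation, and the
sign condition on the first nonzero component rules out `θ₁ = -θ₂`. Evaluating at `x = uθ₁`
then gives `g₁ u = g₂ u`.
-/

open Filter

section Orthogonal

variable {ι R : Type*} [Fintype ι] [Field R] [LinearOrder R] [IsStrictOrderedRing R]

theorem exists_dotProduct_eq_zero_and_ne_zero {θ η : ι → R} (hη : η ≠ 0)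
    (hθ : ∀ c : R, θ ≠ c • η) : ∃ v : ι → R, η ⬝ᵥ v = 0 ∧ θ ⬝ᵥ v ≠ 0 := by
  have hηη : η ⬝ᵥ η ≠ 0 := dotProduct_self_eq_zero.not.mpr hη
  -- the Gram–Schmidt component of `θ` orthogonal to `η`, scaled by `η ⬝ᵥ η`
  set v := (η ⬝ᵥ η) • θ - (θ ⬝ᵥ η) • η with hv
  have hv_orth : η ⬝ᵥ v = 0 := by
    rw [hv, dotProduct_sub, dotProduct_smul, dotProduct_smul, dotProduct_comm η θ, smul_eq_mul,
      smul_eq_mul, mul_comm, sub_self]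
  have hv_ne : v ≠ 0 := by
    intro h
    refine hθ ((θ ⬝ᵥ η) / (η ⬝ᵥ η)) ?_
    rw [hv, sub_eq_zero] at h
    rw [div_eq_inv_mul, mul_smul, ← h, smul_smul, inv_mul_cancel₀ hηη, one_smul]
  refine ⟨v, hv_orth, fun hθv => hv_ne (dotProduct_self_eq_zero.mp ?_)⟩
  calc v ⬝ᵥ v = ((η ⬝ᵥ η) • θ - (θ ⬝ᵥ η) • η) ⬝ᵥ v := rfl
    _ = (η ⬝ᵥ η) * (θ ⬝ᵥ v) - (θ ⬝ᵥ η) * (η ⬝ᵥ v) := by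
      rw [sub_dotProduct, smul_dotProduct, smul_dotProduct, smul_eq_mul, smul_eq_mul]
    _ = 0 := by rw [hθv, hv_orth, mul_zero, mul_zero, sub_zero]

theorem apply_eq_apply_zero_of_comp_dotProduct_eq {β : Type*} {g₁ g₂ : R → β} {θ η : ι → R}
    (hη : η ≠ 0) (hθ : ∀ c : R, θ ≠ c • η) (heq : ∀ x, g₁ (θ ⬝ᵥ x) = g₂ (η ⬝ᵥ x)) (u : R) :
    g₁ u = g₂ 0 := by
  obtain ⟨v, hηv, hθv⟩ := exists_dotProduct_eq_zero_and_ne_zero hη hθ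
  simpa [dotProduct_smul, hηv, hθv] using heq ((u / (θ ⬝ᵥ v)) • v)

end Orthogonal

section FirstNonzeroPos

variable {ι R : Type*} [LinearOrder ι]

def FirstNonzeroPos [Zero R] [LT R] (θ : ι → R) : Prop :=
  ∀ i, (∀ j < i, θ j = 0) → θ i ≠ 0 → 0 < θ i

theorem FirstNonzeroPos.eq_zero_of_neg [WellFoundedLT ι] [Ring R] [LinearOrder R]
    [IsStrictOrderedRing R] {θ : ι → R} (h : FirstNonzeroPos θ)
    (hneg : FirstNonzeroPos (-θ)) : θ = 0 := by
  by_contra hθ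
  obtain ⟨i, hi, hmin⟩ := wellFounded_lt.has_min {i | θ i ≠ 0} (Function.ne_iff.mp hθ)
  have hzero : ∀ j < i, θ j = 0 := fun j hj => not_not.mp fun hj0 => hmin j hj0 hj
  have hpos : 0 < θ i := h i hzero hi
  have hneg_pos : 0 < -θ i := hneg i (fun j hj => by simp [hzero j hj]) (by simpa using hi)
  exact hpos.not_gt (neg_pos.mp hneg_pos)

theorem FirstNonzeroPos.eq_of_eq_smul [WellFoundedLT ι] [Fintype ι] [CommRing R]
    [LinearOrder R] [IsStrictOrderedRing R] {θ η : ι → R} {c : R} (hθ : FirstNonzeroPos θ)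
    (hη : FirstNonzeroPos η) (hη0 : η ≠ 0) (hnorm : θ ⬝ᵥ θ = η ⬝ᵥ η) (hc : θ = c • η) :
    θ = η := by
  have hηη : η ⬝ᵥ η ≠ 0 := dotProduct_self_eq_zero.not.mpr hη0
  have hc2 : c * c = 1 := by
    refine mul_right_cancel₀ hηη ?_
    calc c * c * (η ⬝ᵥ η) = θ ⬝ᵥ θ := by
          rw [hc, dotProduct_smul, smul_dotProduct, smul_eq_mul, smul_eq_mul, mul_assoc]
      _ = 1 * (η ⬝ᵥ η) := by rw [hnorm, one_mul]
  rcases mul_self_eq_one_iff.mp hc2 with rfl | rfl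
  · rw [hc, one_smul]
  · rw [hc, neg_one_smul] at hθ
    exact absurd (hη.eq_zero_of_neg hθ) hη0

end FirstNonzeroPos

theorem single_index_identifiable_general (d : ℕ)
    (g₁ g₂ : ℝ → ℝ)
    (h0₁ : Tendsto g₁ (cocompact ℝ) (nhds 0))
    (hne : ∃ u : ℝ, g₁ u ≠ 0)
    (θ₁ θ₂ : Fin d → ℝ)
    (hθ₁norm : ∑ i, θ₁ i ^ 2 = 1) (hθ₂norm : ∑ i, θ₂ i ^ 2 = 1)
    (hθ₁pos : ∀ i : Fin d, (∀ j < i, θ₁ j = 0) → θ₁ i ≠ 0 → 0 < θ₁ i)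
    (hθ₂pos : ∀ i : Fin d, (∀ j < i, θ₂ j = 0) → θ₂ i ≠ 0 → 0 < θ₂ i)
    (heq : ∀ x : Fin d → ℝ, g₁ (∑ i, θ₁ i * x i) = g₂ (∑ i, θ₂ i * x i)) :
    θ₁ = θ₂ ∧ g₁ = g₂ := by
  have hunit₁ : θ₁ ⬝ᵥ θ₁ = 1 := by simpa [dotProduct, sq] using hθ₁norm
  have hunit₂ : θ₂ ⬝ᵥ θ₂ = 1 := by simpa [dotProduct, sq] using hθ₂norm
  have hθ₂ : θ₂ ≠ 0 := by rintro rfl; simp at hunit₂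
  by_cases hpar : ∃ c : ℝ, θ₁ = c • θ₂
  · obtain ⟨c, hc⟩ := hpar
    have hθ : θ₁ = θ₂ :=
      FirstNonzeroPos.eq_of_eq_smul hθ₁pos hθ₂pos hθ₂ (hunit₁.trans hunit₂.symm) hc
    refine ⟨hθ, funext fun u => ?_⟩
    have : g₁ (θ₁ ⬝ᵥ u • θ₁) = g₂ (θ₂ ⬝ᵥ u • θ₁) := heq (u • θ₁)
    rwa [← hθ, dotProduct_smul, hunit₁, smul_eq_mul, mul_one] at this
  · push Not at hpar
    have hconst : ∀ u, g₁ u = g₂ 0 := apply_eq_apply_zero_of_comp_dotProduct_eq hθ₂ hpar heq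
    rw [show g₁ = fun _ => g₂ 0 from funext hconst, tendsto_const_nhds_iff] at h0₁
    obtain ⟨u, hu⟩ := hne
    exact absurd (h0₁ ▸ hconst u) hu

/-- Identifiability of the single-index model: if `g₁, g₂` are continuous, vanish at infinity,
`g₁` is not identically zero, `θ₁, θ₂` are unit vectors whose first nonzero component is
positive, and `g₁(θ₁ᵀx) = g₂(θ₂ᵀx)` for all `x ∈ ℝ^d`, then `θ₁ = θ₂` and `g₁ = g₂`. -/
theorem single_index_identifiable (d : ℕ) (hd : 1 ≤ d)
    (g₁ g₂ : ℝ → ℝ) (hc₁ : Continuous g₁) (hc₂ : Continuous g₂)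
    (h0₁ : Tendsto g₁ (cocompact ℝ) (nhds 0))
    (h0₂ : Tendsto g₂ (cocompact ℝ) (nhds 0))
    (hne : ∃ u : ℝ, g₁ u ≠ 0)
    (θ₁ θ₂ : Fin d → ℝ)
    (hθ₁norm : ∑ i, θ₁ i ^ 2 = 1) (hθ₂norm : ∑ i, θ₂ i ^ 2 = 1)
    (hθ₁pos : ∀ i : Fin d, (∀ j < i, θ₁ j = 0) → θ₁ i ≠ 0 → 0 < θ₁ i)
    (hθ₂pos : ∀ i : Fin d, (∀ j < i, θ₂ j = 0) → θ₂ i ≠ 0 → 0 < θ₂ i)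
    (heq : ∀ x : Fin d → ℝ, g₁ (∑ i, θ₁ i * x i) = g₂ (∑ i, θ₂ i * x i)) :
    θ₁ = θ₂ ∧ g₁ = g₂ :=
  single_index_identifiable_general d g₁ g₂ h0₁ hne θ₁ θ₂ hθ₁norm hθ₂norm hθ₁pos hθ₂pos heq
end

section
/- Identifiability of the partially linear single-index model: let d ≥ 1, let g₁, g₂ : ℝ → ℝ be continuous functions with g₁(u) → 0 and g₂(u) → 0 as |u| → ∞, with g₁ not identically zero, let β₁, β₂ ∈ ℝ^d, and let θ₁, θ₂ ∈ ℝ^d be unit vectors whose first nonzero component is positive. If β₁^⊤ x + g₁(θ₁^⊤ x) = β₂^⊤ x + g₂(θ₂^⊤ x) for all x ∈ ℝ^d, then β₁ = β₂, θ₁ = θ₂ and g₁ = g₂. In particular, no orthogonality condition between β and θ is needed for identifiability. -/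
/-!
Testing `x = t • x₀` and letting `t → ∞`, the link terms stay bounded because the links vanish
at infinity, so the linear parts agree and hence so do `g₁ ∘ θ₁ᵀ` and `g₂ ∘ θ₂ᵀ`. Testing on
`x = u • θ₁` and `x = u • θ₂` gives `g₁ u = g₂ (c u)` and `g₂ u = g₁ (c u)` with `c = θ₁ᵀθ₂`,
so `g₁ u = g₁ (c² u)`. If `|c| < 1`, iterating and using continuity makes `g₁` constant, hence
zero. So `|c| = 1`, i.e. `θ₂ = ±θ₁`, and the sign normalization excludes `θ₂ = -θ₁`.
-/

open Filter Topology

section VanishingAtInfinity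

variable {g : ℝ → ℝ}

lemma exists_tendsto_comp_mul_atTop (hg : Tendsto g (cocompact ℝ) (𝓝 0)) (b : ℝ) :
    ∃ L, Tendsto (fun t => g (t * b)) atTop (𝓝 L) := by
  rcases lt_trichotomy b 0 with hb | rfl | hb
  · refine ⟨0, hg.comp ?_⟩
    rw [cocompact_eq_atBot_atTop]
    exact (tendsto_id.atTop_mul_const_of_neg hb).mono_right le_sup_left
  · exact ⟨g 0, by simp⟩
  · refine ⟨0, hg.comp ?_⟩
    rw [cocompact_eq_atBot_atTop]
    exact (tendsto_id.atTop_mul_const hb).mono_right le_sup_right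

lemma eq_zero_of_tendsto_mul_atTop {a L : ℝ} (h : Tendsto (fun t => t * a) atTop (𝓝 L)) :
    a = 0 := by
  by_contra ha
  rcases lt_or_gt_of_ne ha with ha | ha
  · exact not_tendsto_nhds_of_tendsto_atBot (tendsto_id.atTop_mul_const_of_neg ha) _ h
  · exact not_tendsto_nhds_of_tendsto_atTop (tendsto_id.atTop_mul_const ha) _ h

lemma eq_apply_zero_of_forall_eq_comp_mul (hg : Continuous g) {r : ℝ} (hr : |r| < 1)
    (h : ∀ u, g u = g (r * u)) (u : ℝ) : g u = g 0 := by
  have hpow : ∀ n : ℕ, g (r ^ n * u) = g u := by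
    intro n
    induction n with
    | zero => simp
    | succ n ih => rw [pow_succ', mul_assoc, ← h, ih]
  have hlim : Tendsto (fun n : ℕ => g (r ^ n * u)) atTop (𝓝 (g 0)) :=
    hg.continuousAt.tendsto.comp (by
      simpa using (tendsto_pow_atTop_nhds_zero_of_abs_lt_one hr).mul_const u)
  simp only [hpow] at hlim
  exact tendsto_nhds_unique tendsto_const_nhds hlim

lemma eq_zero_of_forall_eq_comp_mul (hg : Continuous g) (h0 : Tendsto g (cocompact ℝ) (𝓝 0))
    {r : ℝ} (hr : |r| < 1) (h : ∀ u, g u = g (r * u)) : g = 0 := by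
  have hconst := eq_apply_zero_of_forall_eq_comp_mul hg hr h
  have hg0 : g 0 = 0 := tendsto_nhds_unique tendsto_const_nhds (funext hconst ▸ h0)
  exact funext fun u => (hconst u).trans hg0

end VanishingAtInfinity

section DotProduct

variable {ι : Type*} [Fintype ι]

lemma eq_of_forall_add_comp_dotProduct_eq {β₁ β₂ θ₁ θ₂ : ι → ℝ} {g₁ g₂ : ℝ → ℝ}
    (h0₁ : Tendsto g₁ (cocompact ℝ) (𝓝 0)) (h0₂ : Tendsto g₂ (cocompact ℝ) (𝓝 0))
    (heq : ∀ x, β₁ ⬝ᵥ x + g₁ (θ₁ ⬝ᵥ x) = β₂ ⬝ᵥ x + g₂ (θ₂ ⬝ᵥ x)) : β₁ = β₂ := by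
  refine dotProduct_eq _ _ fun x => sub_eq_zero.mp ?_
  obtain ⟨L₁, hL₁⟩ := exists_tendsto_comp_mul_atTop h0₁ (θ₁ ⬝ᵥ x)
  obtain ⟨L₂, hL₂⟩ := exists_tendsto_comp_mul_atTop h0₂ (θ₂ ⬝ᵥ x)
  refine eq_zero_of_tendsto_mul_atTop ((hL₂.sub hL₁).congr fun t => ?_)
  have := heq (t • x)
  simp only [dotProduct_smul, smul_eq_mul] at this
  linarith

lemma eq_comp_mul_of_forall_comp_dotProduct_eq {θ₁ θ₂ : ι → ℝ} {g₁ g₂ : ℝ → ℝ}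
    (hθ₁ : θ₁ ⬝ᵥ θ₁ = 1) (h : ∀ x, g₁ (θ₁ ⬝ᵥ x) = g₂ (θ₂ ⬝ᵥ x)) (u : ℝ) :
    g₁ u = g₂ ((θ₁ ⬝ᵥ θ₂) * u) := by
  simpa [dotProduct_smul, hθ₁, dotProduct_comm θ₂ θ₁, mul_comm] using h (u • θ₁)

lemma eq_or_eq_neg_of_one_le_abs_dotProduct {u v : ι → ℝ} (hu : u ⬝ᵥ u = 1) (hv : v ⬝ᵥ v = 1)
    (huv : 1 ≤ |u ⬝ᵥ v|) : v = u ∨ v = -u := by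
  have hsub : (u - v) ⬝ᵥ (u - v) = 2 - 2 * (u ⬝ᵥ v) := by
    simp only [sub_dotProduct, dotProduct_sub, hu, hv, dotProduct_comm v u]
    ring
  have hadd : (u + v) ⬝ᵥ (u + v) = 2 + 2 * (u ⬝ᵥ v) := by
    simp only [add_dotProduct, dotProduct_add, hu, hv, dotProduct_comm v u]
    ring
  have hsub_nonneg : 0 ≤ (u - v) ⬝ᵥ (u - v) := Finset.sum_nonneg fun i _ => mul_self_nonneg _
  have hadd_nonneg : 0 ≤ (u + v) ⬝ᵥ (u + v) := Finset.sum_nonneg fun i _ => mul_self_nonneg _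
  rcases le_abs'.mp huv with h | h
  · exact .inr (eq_neg_of_add_eq_zero_right (dotProduct_self_eq_zero.mp (by linarith)))
  · exact .inl (sub_eq_zero.mp (dotProduct_self_eq_zero.mp (by linarith))).symm

end DotProduct

lemma eq_zero_of_first_ne_zero_pos_of_neg {ι : Type*} [LinearOrder ι] [WellFoundedLT ι]
    {θ : ι → ℝ} (hθ : ∀ i, (∀ j < i, θ j = 0) → θ i ≠ 0 → 0 < θ i)
    (hθneg : ∀ i, (∀ j < i, (-θ) j = 0) → (-θ) i ≠ 0 → 0 < (-θ) i) : θ = 0 := by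
  funext i
  induction i using WellFoundedLT.induction with
  | ind i ih =>
    by_contra hi
    have hpos := hθ i ih hi
    have hneg := hθneg i (fun j hj => by simp [ih j hj]) (by simpa using hi)
    simp only [Pi.neg_apply, Left.neg_pos_iff] at hneg
    linarith

theorem partially_linear_single_index_identifiable_general (d : ℕ)
    (g₁ g₂ : ℝ → ℝ) (hc₁ : Continuous g₁)
    (h0₁ : Tendsto g₁ (cocompact ℝ) (nhds 0))
    (h0₂ : Tendsto g₂ (cocompact ℝ) (nhds 0))
    (hne : ∃ u : ℝ, g₁ u ≠ 0)
    (β₁ β₂ : Fin d → ℝ)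
    (θ₁ θ₂ : Fin d → ℝ)
    (hθ₁norm : ∑ i, θ₁ i ^ 2 = 1) (hθ₂norm : ∑ i, θ₂ i ^ 2 = 1)
    (hθ₁pos : ∀ i : Fin d, (∀ j < i, θ₁ j = 0) → θ₁ i ≠ 0 → 0 < θ₁ i)
    (hθ₂pos : ∀ i : Fin d, (∀ j < i, θ₂ j = 0) → θ₂ i ≠ 0 → 0 < θ₂ i)
    (heq : ∀ x : Fin d → ℝ,
      (∑ i, β₁ i * x i) + g₁ (∑ i, θ₁ i * x i) =
        (∑ i, β₂ i * x i) + g₂ (∑ i, θ₂ i * x i)) :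
    β₁ = β₂ ∧ θ₁ = θ₂ ∧ g₁ = g₂ := by
  have hu₁ : θ₁ ⬝ᵥ θ₁ = 1 := by simpa only [dotProduct, sq] using hθ₁norm
  have hu₂ : θ₂ ⬝ᵥ θ₂ = 1 := by simpa only [dotProduct, sq] using hθ₂norm
  have hβ : β₁ = β₂ := eq_of_forall_add_comp_dotProduct_eq h0₁ h0₂ heq
  have hlink : ∀ x, g₁ (θ₁ ⬝ᵥ x) = g₂ (θ₂ ⬝ᵥ x) := fun x => add_left_cancel (hβ ▸ heq x)
  have h₁₂ := eq_comp_mul_of_forall_comp_dotProduct_eq hu₁ hlink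
  have h₂₁ := eq_comp_mul_of_forall_comp_dotProduct_eq hu₂ fun x => (hlink x).symm
  have hc : 1 ≤ |θ₁ ⬝ᵥ θ₂| := by
    by_contra! hc
    obtain ⟨u, hu⟩ := hne
    refine hu (congrFun (eq_zero_of_forall_eq_comp_mul hc₁ h0₁
      (r := (θ₁ ⬝ᵥ θ₂) * (θ₁ ⬝ᵥ θ₂)) ?_ fun v => ?_) u)
    · rw [abs_mul]
      nlinarith [abs_nonneg (θ₁ ⬝ᵥ θ₂)]
    · rw [h₁₂, h₂₁, dotProduct_comm θ₂, mul_assoc]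
  have hθ : θ₂ = θ₁ := (eq_or_eq_neg_of_one_le_abs_dotProduct hu₁ hu₂ hc).resolve_right
    fun h => by simp [eq_zero_of_first_ne_zero_pos_of_neg hθ₁pos (h ▸ hθ₂pos)] at hu₁
  subst hθ
  exact ⟨hβ, rfl, funext fun u => by simpa [hu₁] using h₁₂ u⟩

/-- Identifiability of the partially linear single-index model: if `g₁, g₂` are continuous,
vanish at infinity, `g₁` is not identically zero, `θ₁, θ₂` are unit vectors whose first
nonzero component is positive, `β₁, β₂ ∈ ℝ^d` are unrestricted, and
`β₁ᵀx + g₁(θ₁ᵀx) = β₂ᵀx + g₂(θ₂ᵀx)` for all `x ∈ ℝ^d`, then `β₁ = β₂`, `θ₁ = θ₂` and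
`g₁ = g₂` (no orthogonality between `β` and `θ` is needed). -/
theorem partially_linear_single_index_identifiable (d : ℕ) (hd : 1 ≤ d)
    (g₁ g₂ : ℝ → ℝ) (hc₁ : Continuous g₁) (hc₂ : Continuous g₂)
    (h0₁ : Tendsto g₁ (cocompact ℝ) (nhds 0))
    (h0₂ : Tendsto g₂ (cocompact ℝ) (nhds 0))
    (hne : ∃ u : ℝ, g₁ u ≠ 0)
    (β₁ β₂ : Fin d → ℝ)
    (θ₁ θ₂ : Fin d → ℝ)
    (hθ₁norm : ∑ i, θ₁ i ^ 2 = 1) (hθ₂norm : ∑ i, θ₂ i ^ 2 = 1)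
    (hθ₁pos : ∀ i : Fin d, (∀ j < i, θ₁ j = 0) → θ₁ i ≠ 0 → 0 < θ₁ i)
    (hθ₂pos : ∀ i : Fin d, (∀ j < i, θ₂ j = 0) → θ₂ i ≠ 0 → 0 < θ₂ i)
    (heq : ∀ x : Fin d → ℝ,
      (∑ i, β₁ i * x i) + g₁ (∑ i, θ₁ i * x i) =
        (∑ i, β₂ i * x i) + g₂ (∑ i, θ₂ i * x i)) :
    β₁ = β₂ ∧ θ₁ = θ₂ ∧ g₁ = g₂ :=
  partially_linear_single_index_identifiable_general d g₁ g₂ hc₁ h0₁ h0₂ hne β₁ β₂ θ₁ θ₂ hθ₁norm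
    hθ₂norm hθ₁pos hθ₂pos heq
end
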